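/- Regular functors preserve OPCAs: if A is an ordered partial combinatory algebra in a Heyting (or regular) category E and F : E → C is a regular functor to a regular category, then FA, with the order and application obtained by applying F, is an ordered partial combinatory algebra in C. -/

import Mathlib

/-!
`F` preserves finite limits, so it carries the monos `≤, dom ↪ A × A` to monos into
`F (A × A) ≅ F A × F A`, and a generalized element of `F X` satisfies the image of a relation
exactly when it factors as `k ≫ F q` through a stage `q` of `E` at which the relation holds.
These stages form a sieve, and since `F` preserves pullbacks it preserves meets of such sieves;
so each OPAS axiom for `F A`, and each representability statement, reduces to the corresponding
statement for `A` at a common stage in `E` and is pushed forward again. Covers of `1` stay covers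
of `1` because `F` preserves covers and the terminal object.
-/

open CategoryTheory CategoryTheory.Limits

universe w v u v₁ u₁ v₂ u₂ v₃ u₃

namespace RRC

variable {E : Type u} [Category.{v} E]

/-- A cover is a regular epimorphism. -/
def IsCover {X Y : E} (f : X ⟶ Y) : Prop := Nonempty (RegularEpi f)

/-- A regular category: finite limits, pullback-stable regular-epi/mono image
factorizations. -/
class RegularCat (E : Type u) [Category.{v} E] : Prop where
  hasFiniteLimits : HasFiniteLimits E
  hasImages : HasImages E
  coverFactorThruImage : ∀ {X Y : E} (f : X ⟶ Y),
    IsCover (X := X) (Y := (haveI := hasImages; image f))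
      (haveI := hasImages; haveI := hasFiniteLimits; factorThruImage f)
  coverStable : ∀ {P X Y Z : E} (fst : P ⟶ X) (snd : P ⟶ Y) (f : X ⟶ Z) (g : Y ⟶ Z),
    IsPullback fst snd f g → IsCover g → IsCover fst

attribute [instance] RegularCat.hasFiniteLimits RegularCat.hasImages

/-- A Heyting-algebra structure on a partial order (with all data pinned to the
given order). -/
structure HeytingOn (α : Type w) [PartialOrder α] where
  sup : α → α → α
  inf : α → α → α
  himp : α → α → α
  bot : α
  top : α
  le_top : ∀ a, a ≤ top
  bot_le : ∀ a, bot ≤ a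
  inf_le_left : ∀ a b, inf a b ≤ a
  inf_le_right : ∀ a b, inf a b ≤ b
  le_inf : ∀ a b c, a ≤ b → a ≤ c → a ≤ inf b c
  le_sup_left : ∀ a b, a ≤ sup a b
  le_sup_right : ∀ a b, b ≤ sup a b
  sup_le : ∀ a b c, a ≤ c → b ≤ c → sup a b ≤ c
  le_himp_iff : ∀ a b c, a ≤ himp b c ↔ inf a b ≤ c

/-- Both adjoints `∃_f ⊣ f⁻¹ ⊣ ∀_f` to the pullback map on subobject lattices. -/
structure SubAdjoints {X Y : E} (f : X ⟶ Y) : Type (max u v) where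
  pb : Subobject Y → Subobject X
  pb_spec : ∀ (S : Subobject Y) {Γ : E} (g : Γ ⟶ X), (pb S).Factors g ↔ S.Factors (g ≫ f)
  ex : Subobject X → Subobject Y
  all : Subobject X → Subobject Y
  gc_ex : ∀ (S : Subobject X) (T : Subobject Y), ex S ≤ T ↔ S ≤ pb T
  gc_all : ∀ (T : Subobject Y) (S : Subobject X), pb T ≤ S ↔ T ≤ all S

/-- A Heyting category: a regular category where each subobject lattice is a
Heyting algebra and each pullback map on subobjects has both adjoints. -/
class HeytingCat (E : Type u) [Category.{v} E] : Prop where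
  toRegularCat : RegularCat E
  heyting : ∀ X : E, Nonempty (HeytingOn (Subobject X))
  adjoints : ∀ {X Y : E} (f : X ⟶ Y), Nonempty (SubAdjoints f)

attribute [instance] HeytingCat.toRegularCat

/-- A regular functor: preserves finite limits and covers (regular epis). -/
structure IsRegularFunctor {C : Type u₁} [Category.{v₁} C] {D : Type u₂} [Category.{v₂} D]
    (F : C ⥤ D) : Prop where
  preservesFiniteLimits : PreservesFiniteLimits F
  preservesCovers : ∀ {X Y : C} (f : X ⟶ Y), IsCover f → IsCover (F.map f)

/-- The image of a subobject under a functor (defaults to `⊤` if the functor fails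
to preserve the monomorphism). -/
noncomputable def mapSub {C : Type u₁} [Category.{v₁} C] {D : Type u₂} [Category.{v₂} D]
    (F : C ⥤ D) {X : C} (S : Subobject X) : Subobject (F.obj X) :=
  haveI := Classical.propDecidable (Mono (F.map S.arrow))
  if h : Mono (F.map S.arrow) then @Subobject.mk _ _ _ _ (F.map S.arrow) h else ⊤

section OPAS

variable (E) [HasFiniteLimits E]

/-- An ordered partial applicative structure internal to `E`: a partial order `le`
and a monotone partial binary application with downward closed domain, all
expressed via generalized elements. -/
structure OPAS where
  A : E
  le : Subobject (A ⨯ A)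
  le_refl : ∀ {Γ : E} (x : Γ ⟶ A), le.Factors (prod.lift x x)
  le_antisymm : ∀ {Γ : E} (x y : Γ ⟶ A),
    le.Factors (prod.lift x y) → le.Factors (prod.lift y x) → x = y
  le_trans : ∀ {Γ : E} (x y z : Γ ⟶ A),
    le.Factors (prod.lift x y) → le.Factors (prod.lift y z) → le.Factors (prod.lift x z)
  dom : Subobject (A ⨯ A)
  app : (dom : E) ⟶ A
  dom_down : ∀ {Γ : E} (a b c d : Γ ⟶ A),
    le.Factors (prod.lift a b) → le.Factors (prod.lift c d) →
    dom.Factors (prod.lift b d) → dom.Factors (prod.lift a c)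
  app_mono : ∀ {Γ : E} (a b c d : Γ ⟶ A) (hab : le.Factors (prod.lift a b))
    (hcd : le.Factors (prod.lift c d)) (h : dom.Factors (prod.lift b d)),
    le.Factors (prod.lift (dom.factorThru (prod.lift a c) (dom_down a b c d hab hcd h) ≫ app)
      (dom.factorThru (prod.lift b d) h ≫ app))

end OPAS

variable [HasFiniteLimits E]

/-- `x ≤ y` for generalized elements of an OPAS. -/
def OPAS.Le (S : OPAS E) {Γ : E} (x y : Γ ⟶ S.A) : Prop := S.le.Factors (prod.lift x y)

/-- `x · y ↓ z` for generalized elements of an OPAS. -/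
def OPAS.App (S : OPAS E) {Γ : E} (x y z : Γ ⟶ S.A) : Prop :=
  ∃ h : S.dom.Factors (prod.lift x y), S.dom.factorThru (prod.lift x y) h ≫ S.app = z

/-- Applicative terms in `n` variables (built from projections/variables by
pointwise application); these present the partial combinatory arrows `Aⁿ ⇀ A`. -/
inductive PTerm : ℕ → Type where
  | var {n : ℕ} : Fin n → PTerm n
  | app {n : ℕ} : PTerm n → PTerm n → PTerm n

/-- Weakening of an applicative term. -/
def PTerm.weaken : {n : ℕ} → PTerm n → PTerm (n + 1)
  | _, .var i => .var i.castSucc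
  | _, .app s t => .app s.weaken t.weaken

/-- The term `x₀ x₁ ⋯ xₙ` (iterated application of the extra first variable). -/
def iterTerm : (n : ℕ) → PTerm (n + 1)
  | 0 => .var 0
  | n + 1 => .app (iterTerm n).weaken (.var (Fin.last (n + 1)))

/-- Evaluation (Kleene equality style) of an applicative term on generalized
elements of an OPAS. -/
def OPAS.Eval (S : OPAS E) {Γ : E} : {n : ℕ} → PTerm n → (Fin n → (Γ ⟶ S.A)) → (Γ ⟶ S.A) → Prop
  | _, .var i, x, z => z = x i
  | _, .app s t, x, z => ∃ u v, S.Eval s x u ∧ S.Eval t x v ∧ S.App u v z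

/-- `r` represents the partial combinatory arrow `t` (at its stage of definition):
at every later stage, whenever `t` is defined on a tuple `x` with value `v`, the
iterated application `r x₁ ⋯ xₙ` is defined with value `≤ v`. -/
def OPAS.RepresentsAt (S : OPAS E) {n : ℕ} (t : PTerm n) {Γ : E} (r : Γ ⟶ S.A) : Prop :=
  ∀ (Δ : E) (g : Δ ⟶ Γ) (x : Fin n → (Δ ⟶ S.A)) (v : Δ ⟶ S.A),
    S.Eval t x v → ∃ y : Δ ⟶ S.A, S.Le y v ∧ S.Eval (iterTerm n) (Fin.cons (g ≫ r) x) y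

/-- A subobject is inhabited when its support is the whole terminal object. -/
def Inhab {X : E} (U : Subobject X) : Prop :=
  ∃ (Γ : E) (e : Γ ⟶ ⊤_ E) (a : Γ ⟶ X), IsCover e ∧ U.Factors a

/-- Two subobjects intersect when their intersection is inhabited. -/
def Intersects {X : E} (U V : Subobject X) : Prop :=
  ∃ (Γ : E) (e : Γ ⟶ ⊤_ E) (a : Γ ⟶ X), IsCover e ∧ U.Factors a ∧ V.Factors a

/-- An ordered partial combinatory algebra: an OPAS in which every partial
combinatory arrow is representable (the object of realizers is inhabited). -/
structure OPCA (E : Type u) [Category.{v} E] [HasFiniteLimits E] extends OPAS E where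
  complete : ∀ {n : ℕ} (t : PTerm n), ∃ (Γ : E) (e : Γ ⟶ ⊤_ E) (r : Γ ⟶ toOPAS.A),
    IsCover e ∧ toOPAS.RepresentsAt t r

/-- An OPCA pair `(A', A)`: an OPAS `A` with a subobject `A'` that is closed under
the application of `A` and such that the object of realizers of every partial
combinatory arrow of `A` intersects `A'`. -/
structure OPCAPair (E : Type u) [Category.{v} E] [HasFiniteLimits E] where
  S : OPAS E
  A' : Subobject S.A
  closed : ∀ {Γ : E} (x y z : Γ ⟶ S.A),
    A'.Factors x → A'.Factors y → S.App x y z → A'.Factors z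
  complete : ∀ {n : ℕ} (t : PTerm n), ∃ (Γ : E) (e : Γ ⟶ ⊤_ E) (r : Γ ⟶ S.A),
    IsCover e ∧ A'.Factors r ∧ S.RepresentsAt t r

/-- The underlying object of realizers of an OPCA pair. -/
abbrev OPCAPair.A (P : OPCAPair E) : E := P.S.A

/-- An `F`-filter for a regular functor `F` out of `E`: a subobject of `F A` that
is upward closed, closed under application, and meets `F U` whenever `U ⊆ A`
intersects `A'`. -/
structure RFilter {C : Type u₁} [Category.{v₁} C] (P : OPCAPair E) (F : E ⥤ C) where
  carrier : Subobject (F.obj P.A)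
  upward : ∀ {Γ : C} (p : Γ ⟶ F.obj (P.A ⨯ P.A)),
    (mapSub F P.S.le).Factors p → carrier.Factors (p ≫ F.map prod.fst) →
    carrier.Factors (p ≫ F.map prod.snd)
  app_closed : ∀ {Γ : C} (p : Γ ⟶ F.obj ((P.S.dom : E))),
    carrier.Factors (p ≫ F.map (P.S.dom.arrow ≫ prod.fst)) →
    carrier.Factors (p ≫ F.map (P.S.dom.arrow ≫ prod.snd)) →
    carrier.Factors (p ≫ F.map P.S.app)
  meets : ∀ U : Subobject P.A, Intersects U P.A' →
    ∃ (Γ : C) (e : Γ ⟶ F.obj (⊤_ E)) (a : Γ ⟶ F.obj P.A),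
      IsCover e ∧ (mapSub F U).Factors a ∧ carrier.Factors a

/-- A morphism of regular models `(F, Cf) → (G, Df)`: the isomorphism `η`
restricts to an isomorphism between the image of the filter `Cf` and `Df`. -/
def FilterIso {C : Type u₁} [Category.{v₁} C] {D : Type u₂} [Category.{v₂} D]
    (P : OPCAPair E) (F : E ⥤ C) (G : E ⥤ D) (Cf : RFilter P F) (Df : RFilter P G)
    (H : C ⥤ D) (η : F ⋙ H ≅ G) : Prop :=
  Subobject.mk ((mapSub H Cf.carrier).arrow ≫ η.hom.app P.A) = Df.carrier

end RRC

namespace RRC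

open CategoryTheory CategoryTheory.Limits

variable {E : Type u} [Category.{v} E] [HasFiniteLimits E]

/-- Transport of a binary relation `S ⊆ A × A` along a functor, via the product
comparison morphism (defaulting to `⊤` if monomorphy fails). -/
noncomputable def mapRel {C : Type u₁} [Category.{v₁} C] [HasBinaryProducts C]
    (F : E ⥤ C) {A : E} (S : Subobject (A ⨯ A)) : Subobject (F.obj A ⨯ F.obj A) :=
  haveI := Classical.propDecidable (Mono (F.map S.arrow ≫ prodComparison F A A))
  if h : Mono (F.map S.arrow ≫ prodComparison F A A) then
    @Subobject.mk _ _ _ _ (F.map S.arrow ≫ prodComparison F A A) h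
  else ⊤

end RRC

namespace RRC

variable {E : Type u} [Category.{v} E]

section OPAS

variable [HasFiniteLimits E]

@[simp]
theorem OPAS.eval_var {S : OPAS E} {n : ℕ} {i : Fin n} {Γ : E} {u : Fin n → (Γ ⟶ S.A)}
    {w : Γ ⟶ S.A} : S.Eval (.var i) u w ↔ w = u i := by
  simp only [OPAS.Eval]

@[simp]
theorem OPAS.eval_app {S : OPAS E} {n : ℕ} {s t : PTerm n} {Γ : E} {u : Fin n → (Γ ⟶ S.A)}
    {w : Γ ⟶ S.A} :
    S.Eval (.app s t) u w ↔ ∃ a b, S.Eval s u a ∧ S.Eval t u b ∧ S.App a b w := by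
  simp only [OPAS.Eval]

theorem OPAS.App.comp {S : OPAS E} {Γ Γ' : E} (g : Γ' ⟶ Γ) {a b c : Γ ⟶ S.A}
    (h : S.App a b c) : S.App (g ≫ a) (g ≫ b) (g ≫ c) := by
  obtain ⟨hd, rfl⟩ := h
  have hd' : S.dom.Factors (prod.lift (g ≫ a) (g ≫ b)) := by
    rw [← prod.comp_lift]
    exact Subobject.factors_of_factors_right g hd
  refine ⟨hd', ?_⟩
  rw [← Category.assoc]
  congr 1
  simp [← cancel_mono S.dom.arrow]

theorem OPAS.Eval.comp {S : OPAS E} {n : ℕ} {t : PTerm n} {Γ Γ' : E} (g : Γ' ⟶ Γ)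
    {u : Fin n → (Γ ⟶ S.A)} {w : Γ ⟶ S.A} (h : S.Eval t u w) :
    S.Eval t (fun i => g ≫ u i) (g ≫ w) := by
  induction t generalizing w with
  | var i => exact OPAS.eval_var.mpr (congrArg (g ≫ ·) (OPAS.eval_var.mp h))
  | app s t ihs iht =>
    obtain ⟨a, b, ha, hb, hab⟩ := OPAS.eval_app.mp h
    exact OPAS.eval_app.mpr ⟨g ≫ a, g ≫ b, ihs ha, iht hb, hab.comp g⟩

end OPAS

variable {C : Type u₁} [Category.{v₁} C]

theorem IsCover.comp_isIso {X Y Z : C} {f : X ⟶ Y} (hf : IsCover f) (i : Y ⟶ Z) [IsIso i] :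
    IsCover (f ≫ i) :=
  ((MorphismProperty.cancel_right_of_respectsIso (MorphismProperty.regularEpi C) f i).mpr
    ⟨hf⟩).regularEpi

@[simp]
theorem map_lift_comp_prodComparison [HasBinaryProducts E] [HasBinaryProducts C]
    (F : E ⥤ C) {Γ A B : E} (a : Γ ⟶ A) (b : Γ ⟶ B) :
    F.map (prod.lift a b) ≫ prodComparison F A B = prod.lift (F.map a) (F.map b) := by
  apply prod.hom_ext
  · rw [Category.assoc, prodComparison_fst, ← F.map_comp, prod.lift_fst, prod.lift_fst]
  · rw [Category.assoc, prodComparison_snd, ← F.map_comp, prod.lift_snd, prod.lift_snd]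

def factorsSieve {X : E} (S : Subobject X) : Sieve X where
  arrows _ g := S.Factors g
  downward_closed h g := Subobject.factors_of_factors_right g h

def relSieve [HasBinaryProducts E] {X Γ : E} (S : Subobject (X ⨯ X)) (a b : Γ ⟶ X) :
    Sieve Γ where
  arrows _ q := S.Factors (prod.lift (q ≫ a) (q ≫ b))
  downward_closed {_ _ q} h g := by
    simpa only [← prod.comp_lift, Category.assoc] using Subobject.factors_of_factors_right g h

theorem map_eq_map_of_mem_functorPushforward (F : E ⥤ C) {Γ X : E} {s : Sieve Γ} {Δ : C}
    {p : Δ ⟶ F.obj Γ} (hp : s.functorPushforward F p) {a b : Γ ⟶ X}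
    (h : ∀ ⦃Z : E⦄ (q : Z ⟶ Γ), s q → q ≫ a = q ≫ b) : p ≫ F.map a = p ≫ F.map b := by
  obtain ⟨Z, q, k, hq, rfl⟩ := hp
  simp only [Category.assoc, ← F.map_comp, h q hq]

section FunctorPushforward

variable [HasPullbacks E] (F : E ⥤ C) [PreservesLimitsOfShape WalkingCospan F]

theorem functorPushforward_inf {Γ : E} (s t : Sieve Γ) :
    (s ⊓ t).functorPushforward F = s.functorPushforward F ⊓ t.functorPushforward F := by
  refine le_antisymm ((Sieve.functorPushforward_monotone F Γ).map_inf_le s t) ?_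
  rintro Δ _ ⟨⟨Z₁, q₁, k₁, hs, rfl⟩, ⟨Z₂, q₂, k₂, ht, e⟩⟩
  have hpb := (IsPullback.of_hasPullback q₁ q₂).map F
  refine ⟨pullback q₁ q₂, pullback.fst q₁ q₂ ≫ q₁, hpb.lift k₁ k₂ e,
    ⟨s.downward_closed hs _, ?_⟩, by simp⟩
  rw [pullback.condition]
  exact t.downward_closed ht _

theorem mem_functorPushforward_pullback_factorsSieve {Γ X : E} (S : Subobject X) (f : Γ ⟶ X)
    {Δ : C} (p : Δ ⟶ F.obj Γ) (w : Δ ⟶ F.obj (S : E)) (hw : w ≫ F.map S.arrow = p ≫ F.map f) :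
    ((factorsSieve S).pullback f).functorPushforward F p := by
  have hpb := (IsPullback.of_hasPullback S.arrow f).map F
  refine ⟨pullback S.arrow f, pullback.snd S.arrow f, hpb.lift w p hw, ?_, by simp⟩
  show S.Factors (pullback.snd S.arrow f ≫ f)
  rw [← pullback.condition]
  exact Subobject.factors_comp_arrow _

end FunctorPushforward

section PushRel

variable [HasFiniteLimits E] [HasFiniteLimits C] (F : E ⥤ C) [PreservesFiniteLimits F] {A : E}

noncomputable abbrev pushRel (S : Subobject (A ⨯ A)) : Subobject (F.obj A ⨯ F.obj A) :=
  Subobject.mk (F.map S.arrow ≫ prodComparison F A A)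

theorem mapRel_eq_pushRel (S : Subobject (A ⨯ A)) : mapRel F S = pushRel F S :=
  dif_pos (by infer_instance)

theorem pushRel_factors_map {S : Subobject (A ⨯ A)} {Γ : E} {Δ : C} (p : Δ ⟶ F.obj Γ)
    {a b : Γ ⟶ A} (h : S.Factors (prod.lift a b)) :
    (pushRel F S).Factors (prod.lift (p ≫ F.map a) (p ≫ F.map b)) :=
  ⟨p ≫ F.map (S.factorThru _ h), by simp [← F.map_comp_assoc, ← prod.comp_lift]⟩

theorem pushRel_factors_iff {S : Subobject (A ⨯ A)} {Γ : E} {Δ : C} (p : Δ ⟶ F.obj Γ)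
    (a b : Γ ⟶ A) :
    (pushRel F S).Factors (prod.lift (p ≫ F.map a) (p ≫ F.map b)) ↔
      (relSieve S a b).functorPushforward F p := by
  constructor
  · rintro ⟨w, hw⟩
    have hle : (factorsSieve S).pullback (prod.lift a b) ≤ relSieve S a b := fun _ q hq => by
      simpa [factorsSieve, relSieve, prod.comp_lift] using hq
    refine Sieve.functorPushforward_monotone F Γ hle _
      (mem_functorPushforward_pullback_factorsSieve F S (prod.lift a b) p w ?_)
    rw [← cancel_mono (prodComparison F A A), Category.assoc, map_lift_comp_prodComparison,
      prod.comp_lift, ← hw]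
    exact Category.assoc _ _ _
  · rintro ⟨Z, q, k, hq, rfl⟩
    simpa using pushRel_factors_map F k hq

end PushRel

section PushOPAS

variable [HasFiniteLimits E] [HasFiniteLimits C] (F : E ⥤ C) [PreservesFiniteLimits F]

theorem exists_map_lift {n : ℕ} {X : E} {Δ : C} (x : Fin n → (Δ ⟶ F.obj X)) :
    ∃ (Γ : E) (u : Fin n → (Γ ⟶ X)) (p : Δ ⟶ F.obj Γ), ∀ i, p ≫ F.map (u i) = x i :=
  ⟨∏ᶜ fun _ => X, Pi.π _, Pi.lift x ≫ inv (piComparison F _), fun i => by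
    simp [inv_piComparison_comp_map_π]⟩

theorem exists_lift_of_pushRel_square {A : E} {R₁ R₂ R₃ : Subobject (A ⨯ A)} {Δ : C}
    {a b c d : Δ ⟶ F.obj A} (h₁ : (pushRel F R₁).Factors (prod.lift a b))
    (h₂ : (pushRel F R₂).Factors (prod.lift c d)) (h₃ : (pushRel F R₃).Factors (prod.lift b d)) :
    ∃ (Z : E) (a' b' c' d' : Z ⟶ A) (k : Δ ⟶ F.obj Z),
      R₁.Factors (prod.lift a' b') ∧ R₂.Factors (prod.lift c' d') ∧
      R₃.Factors (prod.lift b' d') ∧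
      k ≫ F.map a' = a ∧ k ≫ F.map b' = b ∧ k ≫ F.map c' = c ∧ k ≫ F.map d' = d := by
  obtain ⟨Γ, u, p, hu⟩ := exists_map_lift F ![a, b, c, d]
  obtain rfl : p ≫ F.map (u 0) = a := hu 0
  obtain rfl : p ≫ F.map (u 1) = b := hu 1
  obtain rfl : p ≫ F.map (u 2) = c := hu 2
  obtain rfl : p ≫ F.map (u 3) = d := hu 3
  rw [pushRel_factors_iff] at h₁ h₂ h₃
  obtain ⟨Z, q, k, ⟨⟨hq₁, hq₂⟩, hq₃⟩, rfl⟩ :=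
    (functorPushforward_inf F _ _).ge _ ⟨(functorPushforward_inf F _ _).ge _ ⟨h₁, h₂⟩, h₃⟩
  exact ⟨Z, q ≫ u 0, q ≫ u 1, q ≫ u 2, q ≫ u 3, k, hq₁, hq₂, hq₃, by simp, by simp, by simp,
    by simp⟩

variable (S : OPAS E)

noncomputable def pushApp : (pushRel F S.dom : C) ⟶ F.obj S.A :=
  (Subobject.underlyingIso (F.map S.dom.arrow ≫ prodComparison F S.A S.A)).hom ≫ F.map S.app

theorem factorThru_pushApp {Γ : E} {Δ : C} (k : Δ ⟶ F.obj Γ) {a b : Γ ⟶ S.A}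
    (h : S.dom.Factors (prod.lift a b)) {x y : Δ ⟶ F.obj S.A} (hx : k ≫ F.map a = x)
    (hy : k ≫ F.map b = y) (hm : (pushRel F S.dom).Factors (prod.lift x y)) :
    (pushRel F S.dom).factorThru _ hm ≫ pushApp F S =
      k ≫ F.map (S.dom.factorThru _ h ≫ S.app) := by
  subst hx hy
  have hiso : (pushRel F S.dom).factorThru _ hm ≫
      (Subobject.underlyingIso (F.map S.dom.arrow ≫ prodComparison F S.A S.A)).hom =
      k ≫ F.map (S.dom.factorThru _ h) := by
    rw [← cancel_mono (F.map S.dom.arrow ≫ prodComparison F S.A S.A)]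
    simp [← F.map_comp_assoc, ← prod.comp_lift]
  rw [pushApp, ← Category.assoc, hiso, Category.assoc, F.map_comp]

noncomputable abbrev pushOPAS : OPAS C where
  A := F.obj S.A
  le := pushRel F S.le
  le_refl x := by simpa using pushRel_factors_map F x (S.le_refl (𝟙 S.A))
  le_antisymm x y hxy hyx := by
    obtain ⟨Γ, u, p, hu⟩ := exists_map_lift F ![x, y]
    obtain rfl : p ≫ F.map (u 0) = x := hu 0
    obtain rfl : p ≫ F.map (u 1) = y := hu 1
    rw [pushRel_factors_iff] at hxy hyx
    exact map_eq_map_of_mem_functorPushforward F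
      ((functorPushforward_inf F _ _).ge _ ⟨hxy, hyx⟩) fun _ _ ⟨h₁, h₂⟩ => S.le_antisymm _ _ h₁ h₂
  le_trans x y z hxy hyz := by
    obtain ⟨Γ, u, p, hu⟩ := exists_map_lift F ![x, y, z]
    obtain rfl : p ≫ F.map (u 0) = x := hu 0
    obtain rfl : p ≫ F.map (u 1) = y := hu 1
    obtain rfl : p ≫ F.map (u 2) = z := hu 2
    rw [pushRel_factors_iff] at hxy hyz ⊢
    refine Sieve.functorPushforward_monotone F Γ ?_ _
      ((functorPushforward_inf F _ _).ge _ ⟨hxy, hyz⟩)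
    rintro _ _ ⟨h₁, h₂⟩
    exact S.le_trans _ _ _ h₁ h₂
  dom := pushRel F S.dom
  app := pushApp F S
  dom_down a b c d hab hcd hbd := by
    obtain ⟨Z, a', b', c', d', k, h₁, h₂, h₃, rfl, rfl, rfl, rfl⟩ :=
      exists_lift_of_pushRel_square F hab hcd hbd
    exact pushRel_factors_map F k (S.dom_down _ _ _ _ h₁ h₂ h₃)
  app_mono a b c d hab hcd hbd := by
    obtain ⟨Z, a', b', c', d', k, h₁, h₂, h₃, rfl, rfl, rfl, rfl⟩ :=
      exists_lift_of_pushRel_square F hab hcd hbd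
    rw [factorThru_pushApp F S k (S.dom_down _ _ _ _ h₁ h₂ h₃) rfl rfl,
      factorThru_pushApp F S k h₃ rfl rfl]
    exact pushRel_factors_map F k (S.app_mono _ _ _ _ h₁ h₂ h₃)

end PushOPAS

section PushOPCA

variable [HasFiniteLimits E] [HasFiniteLimits C] (F : E ⥤ C) [PreservesFiniteLimits F]
  (S : OPAS E)

theorem pushOPAS_le_map {Γ : E} {Δ : C} (p : Δ ⟶ F.obj Γ) {a b : Γ ⟶ S.A} (h : S.Le a b) :
    (pushOPAS F S).Le (p ≫ F.map a) (p ≫ F.map b) :=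
  pushRel_factors_map F p h

theorem pushOPAS_app_map {Γ : E} {Δ : C} (p : Δ ⟶ F.obj Γ) {a b c : Γ ⟶ S.A}
    (h : S.App a b c) : (pushOPAS F S).App (p ≫ F.map a) (p ≫ F.map b) (p ≫ F.map c) := by
  obtain ⟨hd, rfl⟩ := h
  exact ⟨pushRel_factors_map F p hd, factorThru_pushApp F S p hd rfl rfl _⟩

theorem pushOPAS_eval_map {n : ℕ} {t : PTerm n} {Γ : E} {Δ : C} (p : Δ ⟶ F.obj Γ)
    {u : Fin n → (Γ ⟶ S.A)} {w : Γ ⟶ S.A} (h : S.Eval t u w) :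
    (pushOPAS F S).Eval t (fun i => p ≫ F.map (u i)) (p ≫ F.map w) := by
  induction t generalizing w with
  | var i => exact OPAS.eval_var.mpr (congrArg (p ≫ F.map ·) (OPAS.eval_var.mp h))
  | app s t ihs iht =>
    obtain ⟨a, b, ha, hb, hab⟩ := OPAS.eval_app.mp h
    exact OPAS.eval_app.mpr ⟨_, _, ihs ha, iht hb, pushOPAS_app_map F S p hab⟩

theorem exists_eval_of_pushOPAS_eval {n : ℕ} (t : PTerm n) {Γ : E} (u : Fin n → (Γ ⟶ S.A))
    {Δ : C} (p : Δ ⟶ F.obj Γ) {v : Δ ⟶ F.obj S.A}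
    (h : (pushOPAS F S).Eval t (fun i => p ≫ F.map (u i)) v) :
    ∃ (Z : E) (q : Z ⟶ Γ) (k : Δ ⟶ F.obj Z) (w : Z ⟶ S.A),
      k ≫ F.map q = p ∧ S.Eval t (fun i => q ≫ u i) w ∧ k ≫ F.map w = v := by
  induction t generalizing Γ v with
  | var i =>
    exact ⟨Γ, 𝟙 Γ, p, u i, by simp, by simp, (OPAS.eval_var.mp h).symm⟩
  | app s t ihs iht =>
    rw [OPAS.eval_app] at h
    obtain ⟨a, b, hs, ht, hd, rfl⟩ := h
    obtain ⟨Z₁, q₁, k₁, w₁, rfl, hs₁, rfl⟩ := ihs u p hs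
    have ht' : (pushOPAS F S).Eval t (fun i => k₁ ≫ F.map (q₁ ≫ u i)) b := by simpa using ht
    obtain ⟨Z₂, q₂, k₂, w₂, rfl, ht₂, rfl⟩ := iht (fun i => q₁ ≫ u i) k₁ ht'
    have hd' : (pushRel F S.dom).Factors
        (prod.lift (k₂ ≫ F.map (q₂ ≫ w₁)) (k₂ ≫ F.map w₂)) := by simpa using hd
    rw [pushRel_factors_iff] at hd'
    obtain ⟨Z₃, q₃, k₃, hd₃, rfl⟩ := hd'
    refine ⟨Z₃, q₃ ≫ q₂ ≫ q₁, k₃, S.dom.factorThru _ hd₃ ≫ S.app, by simp, ?_, ?_⟩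
    · refine OPAS.eval_app.mpr ⟨_, _, ?_, ?_, hd₃, rfl⟩
      · simpa using hs₁.comp (q₃ ≫ q₂)
      · simpa using ht₂.comp q₃
    · exact (factorThru_pushApp F S k₃ hd₃ (by simp) (by simp) hd).symm

theorem pushOPAS_representsAt {n : ℕ} {t : PTerm n} {Γr : E} {r : Γr ⟶ S.A}
    (hr : S.RepresentsAt t r) : (pushOPAS F S).RepresentsAt t (F.map r) := by
  intro Δ g x v hv
  obtain ⟨Γ, u, p, hu⟩ := exists_map_lift F x
  obtain rfl : (fun i => p ≫ F.map (u i)) = x := funext hu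
  obtain ⟨Z, q, k, w, rfl, hw, rfl⟩ := exists_eval_of_pushOPAS_eval F S t u p hv
  obtain ⟨y, hyw, hy⟩ := hr (Γr ⨯ Z) prod.fst (fun i => prod.snd ≫ q ≫ u i) (prod.snd ≫ w)
    (by simpa using hw.comp prod.snd)
  let m := prod.lift g k ≫ inv (prodComparison F Γr Z)
  refine ⟨m ≫ F.map y, ?_, ?_⟩
  · simpa [m, inv_prodComparison_map_snd_assoc, prod.lift_snd_assoc]
      using pushOPAS_le_map F S m hyw
  · convert pushOPAS_eval_map F S m hy using 2 with i
    cases i using Fin.cases <;>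
      simp [m, inv_prodComparison_map_fst_assoc, inv_prodComparison_map_snd_assoc,
        prod.lift_fst_assoc, prod.lift_snd_assoc]

noncomputable abbrev OPCA.map (O : OPCA E)
    (hF : ∀ {X Y : E} (f : X ⟶ Y), IsCover f → IsCover (F.map f)) : OPCA C where
  toOPAS := pushOPAS F O.toOPAS
  complete t := by
    obtain ⟨Γ, e, r, he, hr⟩ := O.complete t
    exact ⟨F.obj Γ, F.map e ≫ (PreservesTerminal.iso F).hom, F.map r,
      (hF e he).comp_isIso _, pushOPAS_representsAt F _ hr⟩

end PushOPCA

/-- Statement 15: regular functors preserve OPCAs. If `A` is an OPCA in a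
Heyting (or regular) category `E` and `F : E → C` is a regular functor to a
regular category `C`, then `F A`, with the order and application obtained by
applying `F`, is an OPCA in `C`. -/
theorem statement15 {E : Type u} [Category.{v} E] [HeytingCat E]
    {C : Type u₁} [Category.{v₁} C] [RegularCat C]
    (F : E ⥤ C) (hF : IsRegularFunctor F) (O : OPCA E) :
    ∃ O' : OPCA C, ∃ h : O'.A = F.obj O.A,
      (Subobject.map (prod.map (eqToHom h) (eqToHom h))).obj O'.le
          = mapRel F O.toOPAS.le ∧
      (Subobject.map (prod.map (eqToHom h) (eqToHom h))).obj O'.dom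
          = mapRel F O.toOPAS.dom ∧
      (∀ {Γ : E} (x y z : Γ ⟶ O.A), O.toOPAS.App x y z →
        O'.toOPAS.App (F.map x ≫ eqToHom h.symm) (F.map y ≫ eqToHom h.symm)
          (F.map z ≫ eqToHom h.symm)) := by
  have := hF.preservesFiniteLimits
  refine ⟨O.map F hF.preservesCovers, rfl, ?_, ?_, fun x y z h => ?_⟩
  · simp [mapRel_eq_pushRel, Subobject.map_id]
  · simp [mapRel_eq_pushRel, Subobject.map_id]
  · simpa using pushOPAS_app_map F O.toOPAS (𝟙 _) h


end RRC
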